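/- arXiv:2305.17774 — 4 statements merged into one kernel-verified Lean document; each statement's English description precedes it below -/
import Mathlib

section
/- (Sign of the topography correction term in the fully wet case.) Suppose min(w_i, w_{i+1}) > max(z_i, z_{i+1}), and define z_half = min(max(z_i, z_{i+1}), min(w_i, w_{i+1})), y⁻ = min(w_i − z_half, y_i), y⁺ = min(w_{i+1} − z_half, y_{i+1}), w⁻ = y⁻ + z_half, w⁺ = y⁺ + z_half, where w_i = y_i + z_i, w_{i+1} = y_{i+1} + z_{i+1}, and y_i, y_{i+1} ≥ 0. Then (y⁺ − y⁻)·((w⁺ + w⁻)/2 − w_i) ≥ 0. -/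
/-! When the cell is fully wet the interface bottom is `max zi zi1`, below both water levels,
so the hydrostatic reconstruction keeps both water levels unchanged; the correction term is then
`(wi1 - wi) ^ 2 / 2`. -/

lemma min_add_sub_eq_of_le {α : Type*} [AddCommGroup α] [LinearOrder α] [IsOrderedAddMonoid α]
    {y z zh : α} (h : z ≤ zh) : min (y + z - zh) y = y + z - zh :=
  min_eq_left (by rw [add_sub_assoc]; exact add_le_of_nonpos_right (sub_nonpos.mpr h))

theorem topography_correction_fully_wet_general (zi zi1 yi yi1 : ℝ)
    (hwet : max zi zi1 < min (yi + zi) (yi1 + zi1)) :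
    let wi := yi + zi
    let wi1 := yi1 + zi1
    let zh := min (max zi zi1) (min wi wi1)
    let ym := min (wi - zh) yi
    let yp := min (wi1 - zh) yi1
    let wm := ym + zh
    let wp := yp + zh
    0 ≤ (yp - ym) * ((wp + wm) / 2 - wi) := by
  intro wi wi1 zh ym yp wm wp
  have hzh : zh = max zi zi1 := min_eq_left hwet.le
  have hym : ym = wi - zh := by
    change min (yi + zi - zh) yi = yi + zi - zh
    rw [hzh]; exact min_add_sub_eq_of_le (le_max_left zi zi1)
  have hyp : yp = wi1 - zh := by
    change min (yi1 + zi1 - zh) yi1 = yi1 + zi1 - zh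
    rw [hzh]; exact min_add_sub_eq_of_le (le_max_right zi zi1)
  have hterm : (yp - ym) * ((wp + wm) / 2 - wi) = (wi1 - wi) ^ 2 / 2 := by
    simp only [wp, wm, hym, hyp]; ring
  rw [hterm]
  positivity

/-- Sign of the topography correction term in the fully wet case. -/
theorem topography_correction_fully_wet (zi zi1 yi yi1 : ℝ)
    (hyi : 0 ≤ yi) (hyi1 : 0 ≤ yi1)
    (hwet : max zi zi1 < min (yi + zi) (yi1 + zi1)) :
    let wi := yi + zi
    let wi1 := yi1 + zi1
    let zh := min (max zi zi1) (min wi wi1)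
    let ym := min (wi - zh) yi
    let yp := min (wi1 - zh) yi1
    let wm := ym + zh
    let wp := yp + zh
    0 ≤ (yp - ym) * ((wp + wm) / 2 - wi) :=
  topography_correction_fully_wet_general zi zi1 yi yi1 hwet
end

section
/- (Sign of the topography correction term in the partially wet case.) Let z_i ≥ z_{i+1} and min(w_i, w_{i+1}) ≤ max(z_i, z_{i+1}), with w_i = y_i + z_i, w_{i+1} = y_{i+1} + z_{i+1}, y_i, y_{i+1} ≥ 0, and additionally w_{i+1} ≤ w_i. Define z_half = min(max(z_i, z_{i+1}), min(w_i, w_{i+1})) = w_{i+1}, y⁻ = min(w_i − z_half, y_i), y⁺ = min(w_{i+1} − z_half, y_{i+1}) = 0, w± = y± + z_half. Then (y⁺ − y⁻)·((w⁺ + w⁻)/2 − w_i) ≥ 0. -/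
/-!
The interface bottom `zh` lies below `w_{i+1} ≤ w_i`, so both reconstructed levels `w⁻, w⁺` are at
most `w_i`, and the reconstructed depth `y⁺` on the lower side never exceeds `y⁻`. Both factors of
the correction term are therefore nonpositive.
-/

theorem hydrostatic_depth_right_le_left {zi zi1 yi yi1 : ℝ} (hyi : 0 ≤ yi)
    (hw : yi1 + zi1 ≤ yi + zi) :
    let zh := min (max zi zi1) (min (yi + zi) (yi1 + zi1))
    min (yi1 + zi1 - zh) yi1 ≤ min (yi + zi - zh) yi := by
  intro zh
  have hzh : zh = min (max zi zi1) (yi1 + zi1) := by simp only [zh, min_eq_right hw]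
  refine le_min (by linarith [min_le_left (yi1 + zi1 - zh) yi1]) ?_
  calc min (yi1 + zi1 - zh) yi1 ≤ yi1 + zi1 - zh := min_le_left _ _
    _ ≤ yi := by
      -- either `zh = w_{i+1}` and the bound is `0 ≤ yi`, or `zh = max zi zi1 ≥ zi`
      rcases min_choice (max zi zi1) (yi1 + zi1) with h | h <;> rw [hzh, h]
      · linarith [le_max_left zi zi1]
      · linarith

theorem topography_correction_partially_wet_general (zi zi1 yi yi1 : ℝ)
    (hyi : 0 ≤ yi) (hw : yi1 + zi1 ≤ yi + zi) :
    let wi := yi + zi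
    let wi1 := yi1 + zi1
    let zh := min (max zi zi1) (min wi wi1)
    let ym := min (wi - zh) yi
    let yp := min (wi1 - zh) yi1
    let wm := ym + zh
    let wp := yp + zh
    0 ≤ (yp - ym) * ((wp + wm) / 2 - wi) := by
  intro wi wi1 zh ym yp wm wp
  have hy : yp ≤ ym := hydrostatic_depth_right_le_left hyi hw
  have hym : ym ≤ wi - zh := min_le_left _ _
  have hyp : yp ≤ wi1 - zh := min_le_left _ _
  have hwm : wm ≤ wi := by linarith
  have hwp : wp ≤ wi := by linarith
  exact mul_nonneg_of_nonpos_of_nonpos (by linarith) (by linarith)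

/-- Sign of the topography correction term in the partially wet case (left bottom higher). -/
theorem topography_correction_partially_wet (zi zi1 yi yi1 : ℝ)
    (hyi : 0 ≤ yi) (hyi1 : 0 ≤ yi1) (hz : zi1 ≤ zi)
    (hdry : min (yi + zi) (yi1 + zi1) ≤ max zi zi1)
    (hw : yi1 + zi1 ≤ yi + zi) :
    let wi := yi + zi
    let wi1 := yi1 + zi1
    let zh := min (max zi zi1) (min wi wi1)
    let ym := min (wi - zh) yi
    let yp := min (wi1 - zh) yi1
    let wm := ym + zh
    let wp := yp + zh
    0 ≤ (yp - ym) * ((wp + wm) / 2 - wi) :=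
  topography_correction_partially_wet_general zi zi1 yi yi1 hyi hw
end

section
/- (Bound on flux limiter from a one-sided linear constraint.) Let g⁺, g⁻ ∈ ℝ (antidiffusive fluxes), Q⁻ ≤ 0 ≤ Q⁺ real bounds, and define P⁻ = min(0, −g⁺) + min(0, g⁻), P⁺ = max(0, −g⁺) + max(0, g⁻), R⁻ = min(1, Q⁻/P⁻) if P⁻ < 0 else 1, R⁺ = min(1, Q⁺/P⁺) if P⁺ > 0 else 1. If α₊, α₋ ∈ [0,1] satisfy α₊ ≤ R := min over the appropriate one-sided ratios (α₊ ≤ R⁺ if −g⁺ > 0, α₊ ≤ R⁻ if −g⁺ < 0, similarly for α₋ and g⁻), then Q⁻ ≤ −α₊ g⁺ + α₋ g⁻ ≤ Q⁺. -/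
/-!
Each limited flux `α * f` lies between `R * min 0 f` and `R * max 0 f`, where `R` is the ratio
attached to the sign of `f`. Summing, the limited total lies between `R⁻ * P⁻` and `R⁺ * P⁺`, and
the ratios are chosen exactly so that `R⁺ * P⁺ ≤ Q⁺` and `Q⁻ ≤ R⁻ * P⁻`.
-/

section Limiter

variable {c x R : ℝ}

theorem mul_le_mul_max_zero (hc : 0 ≤ c) (h : 0 < x → c ≤ R) : c * x ≤ R * max 0 x := by
  rcases le_or_gt x 0 with hx | hx
  · rw [max_eq_left hx, mul_zero]
    exact mul_nonpos_of_nonneg_of_nonpos hc hx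
  · rw [max_eq_right hx.le]
    exact mul_le_mul_of_nonneg_right (h hx) hx.le

theorem mul_min_zero_le_mul (hc : 0 ≤ c) (h : x < 0 → c ≤ R) : R * min 0 x ≤ c * x := by
  rcases le_or_gt 0 x with hx | hx
  · rw [min_eq_left hx, mul_zero]
    exact mul_nonneg hc hx
  · rw [min_eq_right hx.le]
    exact mul_le_mul_of_nonpos_right (h hx) hx.le

variable {P Q : ℝ}

theorem upper_ratio_mul_le (hP : 0 ≤ P) (hQ : 0 ≤ Q) :
    (if 0 < P then min 1 (Q / P) else 1) * P ≤ Q := by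
  split_ifs with hPpos
  · calc min 1 (Q / P) * P ≤ Q / P * P := mul_le_mul_of_nonneg_right (min_le_right _ _) hP
      _ = Q := div_mul_cancel₀ Q hPpos.ne'
  · rw [le_antisymm (not_lt.mp hPpos) hP, mul_zero]
    exact hQ

theorem le_lower_ratio_mul (hP : P ≤ 0) (hQ : Q ≤ 0) :
    Q ≤ (if P < 0 then min 1 (Q / P) else 1) * P := by
  split_ifs with hPneg
  · calc Q = Q / P * P := (div_mul_cancel₀ Q hPneg.ne).symm
      _ ≤ min 1 (Q / P) * P := mul_le_mul_of_nonpos_right (min_le_right _ _) hP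
  · rw [le_antisymm hP (not_lt.mp hPneg), mul_zero]
    exact hQ

end Limiter

/-- Bound on flux limiters from one-sided linear constraints (Zalesak-type limiter bound). -/
theorem flux_limiter_bound (gp gm Qm Qp ap am : ℝ)
    (hQm : Qm ≤ 0) (hQp : 0 ≤ Qp)
    (hap : ap ∈ Set.Icc (0 : ℝ) 1) (ham : am ∈ Set.Icc (0 : ℝ) 1) :
    let Pm := min 0 (-gp) + min 0 gm
    let Pp := max 0 (-gp) + max 0 gm
    let Rm := if Pm < 0 then min 1 (Qm / Pm) else 1
    let Rp := if 0 < Pp then min 1 (Qp / Pp) else 1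
    (0 < -gp → ap ≤ Rp) → (-gp < 0 → ap ≤ Rm) →
    (0 < gm → am ≤ Rp) → (gm < 0 → am ≤ Rm) →
    Qm ≤ -ap * gp + am * gm ∧ -ap * gp + am * gm ≤ Qp := by
  intro Pm Pp Rm Rp hap_pos hap_neg ham_pos ham_neg
  rw [neg_mul_comm]
  have hPm : Pm ≤ 0 := add_nonpos (min_le_left _ _) (min_le_left _ _)
  have hPp : 0 ≤ Pp := add_nonneg (le_max_left _ _) (le_max_left _ _)
  constructor
  · calc Qm ≤ Rm * Pm := le_lower_ratio_mul hPm hQm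
      _ = Rm * min 0 (-gp) + Rm * min 0 gm := mul_add _ _ _
      _ ≤ ap * -gp + am * gm :=
        add_le_add (mul_min_zero_le_mul hap.1 hap_neg) (mul_min_zero_le_mul ham.1 ham_neg)
  · calc ap * -gp + am * gm ≤ Rp * max 0 (-gp) + Rp * max 0 gm :=
          add_le_add (mul_le_mul_max_zero hap.1 hap_pos) (mul_le_mul_max_zero ham.1 ham_pos)
      _ = Rp * Pp := (mul_add _ _ _).symm
      _ ≤ Qp := upper_ratio_mul_le hPp hQp
end

section
/- If for each interface the limiter is defined by α_{i+1/2} = min(R_i^{+}, R_{i+1}^{-}) when g_{i+1/2}^{AD} < 0 and α_{i+1/2} = min(R_i^{-}, R_{i+1}^{+}) when g_{i+1/2}^{AD} > 0, with R_i^{−} = min(1, min(0,Q_i^-)/P_i^-) (interpreted as 1 when P_i^- = 0) and R_i^{+} = min(1, max(0,Q_i^+)/P_i^+) (interpreted as 1 when P_i^+ = 0), where P_i^- = min(0,−g_{i+1/2}^{AD}) + min(0, g_{i−1/2}^{AD}) and P_i^+ = max(0,−g_{i+1/2}^{AD}) + max(0, g_{i−1/2}^{AD}), and Q_i^- ≤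 0 ≤ Q_i^+, then for every i: Q_i^- ≤ −α_{i+1/2} g_{i+1/2}^{AD} + α_{i−1/2} g_{i−1/2}^{AD} ≤ Q_i^+ and α_{i+1/2} ∈ [0,1]. -/
/-!
`R⁺ᵢ = limiterRatio Q⁺ᵢ P⁺ᵢ = min 1 (Q⁺ᵢ / P⁺ᵢ)` satisfies `R⁺ᵢ P⁺ᵢ ≤ Q⁺ᵢ`, where `P⁺ᵢ` is the
total antidiffusive flux that could enter cell `i`. A face whose flux enters cell `i` is limited
by a minimum involving `R⁺ᵢ`, so it contributes at most `R⁺ᵢ` times its share of `P⁺ᵢ`; an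
outgoing face contributes nonpositively. Summing the two faces gives the upper bound. The lower
bound is the same argument for the negated data, since `R⁻` is the upper ratio of `-Q⁻`, `-P⁻`.
-/

open Set

noncomputable def limiterRatio (Q P : ℝ) : ℝ :=
  if P = 0 then 1 else min 1 (max 0 Q / P)

lemma limiterRatio_mem_Icc {Q P : ℝ} (hP : 0 ≤ P) : limiterRatio Q P ∈ Icc 0 1 := by
  unfold limiterRatio
  split_ifs
  · exact ⟨zero_le_one, le_rfl⟩
  · exact ⟨le_min zero_le_one (div_nonneg (le_max_left _ _) hP), min_le_left _ _⟩

lemma limiterRatio_mul_le {Q P : ℝ} (hQ : 0 ≤ Q) (hP : 0 ≤ P) : limiterRatio Q P * P ≤ Q := by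
  unfold limiterRatio
  split_ifs with h
  · simpa [h] using hQ
  · calc min 1 (max 0 Q / P) * P ≤ Q / P * P := by
          rw [max_eq_right hQ]
          exact mul_le_mul_of_nonneg_right (min_le_right _ _) hP
      _ = Q := div_mul_cancel₀ Q h

lemma limiterRatio_neg_neg (Q P : ℝ) :
    (if P = 0 then 1 else min 1 (min 0 Q / P)) = limiterRatio (-Q) (-P) := by
  have hratio : min 0 Q / P = max 0 (-Q) / -P := by
    rw [div_neg, ← neg_div, ← neg_zero, max_neg_neg, neg_neg, neg_zero]
  simp only [limiterRatio, neg_eq_zero, hratio]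

lemma neg_min_zero_neg_add_min_zero (a b : ℝ) :
    -(min 0 (-a) + min 0 b) = max 0 a + max 0 (-b) := by
  rw [neg_add, ← max_neg_neg, ← max_neg_neg, neg_zero, neg_neg]

lemma mul_le_mul_max_zero_s16 {γ R z : ℝ} (hγ : 0 ≤ γ) (hγR : 0 < z → γ ≤ R) :
    γ * z ≤ R * max 0 z := by
  rcases lt_or_ge 0 z with hz | hz
  · rw [max_eq_right hz.le]
    exact mul_le_mul_of_nonneg_right (hγR hz) hz.le
  · rw [max_eq_left hz, mul_zero]
    exact mul_nonpos_of_nonneg_of_nonpos hγ hz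

lemma add_mul_le_of_le_limiterRatio {α β R Q x y : ℝ} (hα : 0 ≤ α) (hβ : 0 ≤ β) (hQ : 0 ≤ Q)
    (hR : R = limiterRatio Q (max 0 x + max 0 y)) (hαR : 0 < x → α ≤ R) (hβR : 0 < y → β ≤ R) :
    α * x + β * y ≤ Q := by
  have hRQ : R * (max 0 x + max 0 y) ≤ Q := hR ▸ limiterRatio_mul_le hQ (by positivity)
  linarith [mul_le_mul_max_zero_s16 hα hαR, mul_le_mul_max_zero_s16 hβ hβR]

/-- The approximate flux limiters keep the antidiffusive correction within the
prescribed one-sided bounds, and lie in `[0,1]`. -/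
theorem flux_limiters_satisfy_bounds
    (g Qm Qp Pm Pp Rm Rp α : ℤ → ℝ)
    (hQ : ∀ i, Qm i ≤ 0 ∧ 0 ≤ Qp i)
    (hPm : ∀ i, Pm i = min 0 (-(g i)) + min 0 (g (i - 1)))
    (hPp : ∀ i, Pp i = max 0 (-(g i)) + max 0 (g (i - 1)))
    (hRm : ∀ i, Rm i = if Pm i = 0 then 1 else min 1 (min 0 (Qm i) / Pm i))
    (hRp : ∀ i, Rp i = if Pp i = 0 then 1 else min 1 (max 0 (Qp i) / Pp i))
    (hαneg : ∀ i, g i < 0 → α i = min (Rp i) (Rm (i + 1)))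
    (hαpos : ∀ i, 0 < g i → α i = min (Rm i) (Rp (i + 1)))
    (hαzero : ∀ i, g i = 0 → 0 ≤ α i ∧ α i ≤ 1) :
    ∀ i : ℤ,
      (Qm i ≤ -(α i) * g i + α (i - 1) * g (i - 1) ∧
        -(α i) * g i + α (i - 1) * g (i - 1) ≤ Qp i) ∧
      0 ≤ α i ∧ α i ≤ 1 := by
  have hNegPm : ∀ i, -Pm i = max 0 (g i) + max 0 (-g (i - 1)) := fun i => by
    rw [hPm, neg_min_zero_neg_add_min_zero]
  have hNegPm0 : ∀ i, 0 ≤ -Pm i := fun i => by rw [hNegPm]; positivity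
  have hPp0 : ∀ i, 0 ≤ Pp i := fun i => by rw [hPp]; positivity
  have hRm' : ∀ i, Rm i = limiterRatio (-Qm i) (-Pm i) := fun i =>
    (hRm i).trans (limiterRatio_neg_neg _ _)
  have hRp' : ∀ i, Rp i = limiterRatio (Qp i) (Pp i) := hRp
  have hRm01 : ∀ i, Rm i ∈ Icc (0 : ℝ) 1 := fun i => hRm' i ▸ limiterRatio_mem_Icc (hNegPm0 i)
  have hRp01 : ∀ i, Rp i ∈ Icc (0 : ℝ) 1 := fun i => hRp' i ▸ limiterRatio_mem_Icc (hPp0 i)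
  have hα01 : ∀ i, α i ∈ Icc (0 : ℝ) 1 := fun i => by
    rcases lt_trichotomy (g i) 0 with h | h | h
    · exact hαneg i h ▸ min_rec' (· ∈ Icc 0 1) (hRp01 i) (hRm01 (i + 1))
    · exact hαzero i h
    · exact hαpos i h ▸ min_rec' (· ∈ Icc 0 1) (hRm01 i) (hRp01 (i + 1))
  intro i
  refine ⟨⟨?lower, ?upper⟩, hα01 i⟩
  case lower =>
    have := add_mul_le_of_le_limiterRatio (hα01 i).1 (hα01 (i - 1)).1
      (neg_nonneg.mpr (hQ i).1) (by rw [hRm', hNegPm]) (fun h => hαpos i h ▸ min_le_left _ _)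
      (fun h => by rw [hαneg (i - 1) (neg_pos.mp h), sub_add_cancel]; exact min_le_right _ _)
    linarith
  case upper =>
    have := add_mul_le_of_le_limiterRatio (hα01 i).1 (hα01 (i - 1)).1
      (hQ i).2 (by rw [hRp', hPp]) (fun h => hαneg i (neg_pos.mp h) ▸ min_le_left _ _)
      (fun h => by rw [hαpos (i - 1) h, sub_add_cancel]; exact min_le_right _ _)
    linarith
end
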